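/- Let A be a finite alphabet with at least two letters, u ∈ A⁺ a nonempty word, π a permutation of A, w a prefix of Pal(u), and let σ be the w-conjugate of ψ_u ∘ π; assume σ is primitive, and let a_min be the minimal letter of σ. If |w| ≥ |σ(a_min)|, then there exists N ∈ ℕ such that for every n ≥ N and every word v of length n that is bispecial in L(σ), the image of the left return set of a_min·v differs from the left return set of its image: {σ(r) : r ∈ R(a_min·v)} ≠ R(σ(a_min·v)) (return sets taken in L(σ)). -/

import Mathlib

open List

section EpiDefs

variable {A : Type*}

/-- The episturmian generator ψ_a : a ↦ a, b ↦ ab for b ≠ a, as a map on words. -/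
def psiL [DecidableEq A] (a : A) : List A → List A :=
  fun u => (u.map (fun b => if b = a then [a] else [a, b])).flatten

/-- The episturmian generator ψ̄_a : a ↦ a, b ↦ ba for b ≠ a, as a map on words. -/
def psibarL [DecidableEq A] (a : A) : List A → List A :=
  fun u => (u.map (fun b => if b = a then [a] else [b, a])).flatten

/-- ψ_{u₁⋯uₙ} = ψ_{u₁} ∘ ⋯ ∘ ψ_{uₙ}. -/
def psiW [DecidableEq A] (u : List A) : List A → List A :=
  u.foldr (fun a f => psiL a ∘ f) id

/-- ψ̄_{u₁⋯uₙ} = ψ̄_{u₁} ∘ ⋯ ∘ ψ̄_{uₙ}. -/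
def psibarW [DecidableEq A] (u : List A) : List A → List A :=
  u.foldr (fun a f => psibarL a ∘ f) id

/-- There is a shortest palindrome having `x` as a prefix. -/
theorem exists_isPalClosure (x : List A) :
    ∃ p : List A, (p.reverse = p ∧ x <+: p) ∧
      ∀ q : List A, q.reverse = q → x <+: q → p.length ≤ q.length := by
  classical
  have hex : ∃ n : ℕ, ∃ p : List A, (p.reverse = p ∧ x <+: p) ∧ p.length = n :=
    ⟨(x ++ x.reverse).length, x ++ x.reverse, ⟨by simp, ⟨x.reverse, rfl⟩⟩, rfl⟩
  obtain ⟨p, hp, hlen⟩ := Nat.find_spec hex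
  refine ⟨p, hp, fun q h1 h2 => ?_⟩
  rw [hlen]
  exact Nat.find_le ⟨q, ⟨h1, h2⟩, rfl⟩

/-- `palPlus x = x⁽⁺⁾` is the shortest palindrome having `x` as a prefix. -/
noncomputable def palPlus (x : List A) : List A :=
  Classical.choose (exists_isPalClosure x)

/-- Iterated palindromic closure: Pal(ε) = ε, Pal(ua) = (Pal(u)a)⁽⁺⁾. -/
noncomputable def pal (u : List A) : List A :=
  u.foldl (fun p a => palPlus (p ++ [a])) []

/-- Longest common prefix. -/
def gcp [DecidableEq A] : List A → List A → List A
  | a :: x, b :: y => if a = b then a :: gcp x y else []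
  | _, _ => []

/-- Longest common suffix. -/
def gcs [DecidableEq A] (x y : List A) : List A :=
  (gcp x.reverse y.reverse).reverse

/-- The language of a (primitive) substitution: factors of σⁿ(a). -/
def LangS (σ : List A → List A) : Set (List A) :=
  {x | ∃ (n : ℕ) (a : A), x <:+: σ^[n] [a]}

/-- The language of the episturmian shift directed by `d`. -/
def LangD (d : ℕ → A) : Set (List A) :=
  {x | ∃ n : ℕ, x <:+: pal ((List.range n).map d)}

def LeftSpecial (L : Set (List A)) (v : List A) : Prop :=
  ∃ a b : A, a ≠ b ∧ a :: v ∈ L ∧ b :: v ∈ L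

def RightSpecial (L : Set (List A)) (v : List A) : Prop :=
  ∃ a b : A, a ≠ b ∧ v ++ [a] ∈ L ∧ v ++ [b] ∈ L

/-- The left return set of `u` in the language `L`. -/
def leftReturn (L : Set (List A)) (u : List A) : Set (List A) :=
  {r | r ++ u ∈ L ∧ (∃ s : List A, s ≠ [] ∧ r ++ u = u ++ s) ∧
    ¬∃ p q : List A, p ≠ [] ∧ q ≠ [] ∧ r ++ u = p ++ u ++ q}

/-- The right return set of `u` in the language `L`. -/
def rightReturn (L : Set (List A)) (u : List A) : Set (List A) :=
  {r | u ++ r ∈ L ∧ (∃ p : List A, p ≠ [] ∧ u ++ r = p ++ u) ∧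
    ¬∃ p q : List A, p ≠ [] ∧ q ≠ [] ∧ u ++ r = p ++ u ++ q}

/-- `σ` is an endomorphism of the free monoid A*. -/
def IsListHom (σ : List A → List A) : Prop :=
  ∀ x y : List A, σ (x ++ y) = σ x ++ σ y

/-- Primitivity of a substitution. -/
def IsPrimitiveSubst (σ : List A → List A) : Prop :=
  ∃ k : ℕ, 1 ≤ k ∧ ∀ a b : A, b ∈ σ^[k] [a]

/-- At least two distinct letters occur infinitely often in `d`. -/
def NonDegenerate (d : ℕ → A) : Prop :=
  ∃ a b : A, a ≠ b ∧ (∀ N : ℕ, ∃ n : ℕ, N ≤ n ∧ d n = a) ∧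
    (∀ N : ℕ, ∃ n : ℕ, N ≤ n ∧ d n = b)

end EpiDefs

section AuxLemmas

variable {A : Type*}

lemma auxHomNil {σ : List A → List A} (h : IsListHom σ) : σ [] = [] := by
  have h1 := h [] []
  simp only [List.append_nil] at h1
  have h2 := congrArg List.length h1
  simp only [List.length_append] at h2
  exact List.eq_nil_of_length_eq_zero (by omega)

lemma auxHomIterate {σ : List A → List A} (h : IsListHom σ) (n : ℕ) :
    IsListHom σ^[n] := by
  induction n with
  | zero => intro x y; simp
  | succ n ih =>
    intro x y
    rw [Function.iterate_succ_apply', Function.iterate_succ_apply',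
      Function.iterate_succ_apply', ih, h]

lemma auxIterateNil {σ : List A → List A} (h : IsListHom σ) (n : ℕ) :
    σ^[n] [] = [] := by
  induction n with
  | zero => simp
  | succ n ih => rw [Function.iterate_succ_apply', ih, auxHomNil h]

lemma auxHomInfix {σ : List A → List A} (h : IsListHom σ) {x y : List A}
    (hxy : x <:+: y) : σ x <:+: σ y := by
  obtain ⟨s, t, hst⟩ := hxy
  exact ⟨σ s, σ t, by rw [← h, ← h, hst]⟩

lemma auxMemLangS {σ : List A → List A} (n : ℕ) (a : A) : σ^[n] [a] ∈ LangS σ :=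
  ⟨n, a, List.infix_rfl⟩

lemma auxLangSFactor {σ : List A → List A} {x y : List A} (hxy : x <:+: y)
    (hy : y ∈ LangS σ) : x ∈ LangS σ := by
  obtain ⟨n, a, h⟩ := hy
  exact ⟨n, a, hxy.trans h⟩

lemma auxLangSSigma {σ : List A → List A} (h : IsListHom σ) {y : List A}
    (hy : y ∈ LangS σ) : σ y ∈ LangS σ := by
  obtain ⟨n, a, hn⟩ := hy
  refine ⟨n + 1, a, ?_⟩
  rw [Function.iterate_succ_apply']
  exact auxHomInfix h hn

lemma auxImgNeNil {σ : List A → List A} [Nonempty A] (h : IsListHom σ)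
    (hprim : IsPrimitiveSubst σ) (a : A) : σ [a] ≠ [] := by
  obtain ⟨k, hk1, hall⟩ := hprim
  intro hnil
  obtain ⟨k', rfl⟩ : ∃ k', k = k' + 1 := ⟨k - 1, by omega⟩
  have hb := hall a (Classical.arbitrary A)
  rw [Function.iterate_succ_apply, hnil, auxIterateNil h] at hb
  exact absurd hb List.not_mem_nil

lemma auxSigmaNeNil {σ : List A → List A} (h : IsListHom σ)
    (himg : ∀ a : A, σ [a] ≠ []) {z : List A} (hz : z ≠ []) : σ z ≠ [] := by
  obtain ⟨c, z', rfl⟩ := List.exists_cons_of_ne_nil hz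
  rw [show (c :: z') = [c] ++ z' from rfl, h]
  simp only [ne_eq, List.append_eq_nil_iff]
  intro ⟨h1, _⟩
  exact himg c h1

lemma auxIterSingleNeNil {σ : List A → List A} (h : IsListHom σ)
    (himg : ∀ a : A, σ [a] ≠ []) (n : ℕ) (a : A) : σ^[n] [a] ≠ [] := by
  induction n with
  | zero => simp
  | succ n ih =>
    rw [Function.iterate_succ_apply']
    exact auxSigmaNeNil h himg ih

lemma auxHomFlatten {σ : List A → List A} (h : IsListHom σ) (z : List A) :
    σ z = (z.map (fun c => σ [c])).flatten := by
  induction z with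
  | nil => simpa using auxHomNil h
  | cons c z' ih =>
    rw [show (c :: z') = [c] ++ z' from rfl, h, ih]
    simp

lemma auxTwoLeLength {l : List A} {a b : A} (ha : a ∈ l) (hb : b ∈ l)
    (hab : a ≠ b) : 2 ≤ l.length := by
  match l with
  | [] => simp at ha
  | [x] =>
    rw [List.mem_singleton] at ha hb
    exact absurd (ha.trans hb.symm) hab
  | x :: y :: l' => simp

/-- Block lemma: a long factor of a flattening contains a full block. -/
lemma auxBlockInfix {M : ℕ} :
    ∀ (l : List (List A)) (y : List A), (∀ b ∈ l, b ≠ []) →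
      (∀ b ∈ l, b.length ≤ M) → y <:+: l.flatten → 2 * M ≤ y.length →
      y ≠ [] → ∃ b ∈ l, b <:+: y := by
  intro l
  induction l with
  | nil =>
    intro y _ _ hinf _ hne
    simp only [List.flatten_nil, List.infix_nil] at hinf
    exact absurd hinf hne
  | cons b l ih =>
    intro y hnn hlen hinf hy hyne
    obtain ⟨s, t, hst⟩ := hinf
    rw [List.flatten_cons] at hst
    have hsP : s <+: b ++ l.flatten := ⟨y ++ t, by simpa [List.append_assoc] using hst⟩
    have hbP : b <+: b ++ l.flatten := List.prefix_append _ _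
    by_cases hbs : b.length ≤ s.length
    · -- b is a prefix of s; recurse
      have hbp : b <+: s := List.prefix_of_prefix_length_le hbP hsP hbs
      obtain ⟨s', rfl⟩ := hbp
      have hst' : s' ++ y ++ t = l.flatten := by
        have h2 : b ++ (s' ++ (y ++ t)) = b ++ l.flatten := by
          simpa [List.append_assoc] using hst
        have := List.append_cancel_left h2
        simpa [List.append_assoc] using this
      obtain ⟨b', hb', hbi⟩ := ih y (fun c hc => hnn c (List.mem_cons_of_mem _ hc))
        (fun c hc => hlen c (List.mem_cons_of_mem _ hc)) ⟨s', t, hst'⟩ hy hyne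
      exact ⟨b', List.mem_cons_of_mem _ hb', hbi⟩
    · push_neg at hbs
      have hsp : s <+: b := List.prefix_of_prefix_length_le hsP hbP hbs.le
      obtain ⟨b'', rfl⟩ := hsp
      have heq : y ++ t = b'' ++ l.flatten := by
        have h2 : s ++ (y ++ t) = s ++ (b'' ++ l.flatten) := by
          simpa [List.append_assoc] using hst
        exact List.append_cancel_left h2
      match l with
      | [] =>
        exfalso
        simp only [List.flatten_nil, List.append_nil] at heq
        have h1 : (s ++ b'').length ≤ M := hlen _ List.mem_cons_self
        have h2 := congrArg List.length heq
        have h3 : 0 < y.length := List.length_pos_iff.mpr hyne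
        simp only [List.length_append] at h1 h2
        omega
      | b₂ :: l' =>
        refine ⟨b₂, by simp, ?_⟩
        have hb''M : (s ++ b'').length ≤ M := hlen _ List.mem_cons_self
        have hb₂M : b₂.length ≤ M := hlen _ (by simp)
        have hb''le : b''.length ≤ (s ++ b'').length := by simp
        have hby : y = b'' ++ b₂ ++ (l'.flatten.take (y.length - b''.length - b₂.length)) := by
          have h := congrArg (List.take y.length) heq
          rw [List.take_left] at h
          rw [List.flatten_cons, List.take_append,
            List.take_append] at h
          have h1 : b''.length ≤ y.length := by omega
          have h2 : b₂.length ≤ y.length - b''.length := by omega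
          rw [List.take_of_length_le h1, List.take_of_length_le h2] at h
          rw [h]; simp [List.append_assoc]
        exact ⟨b'', _, hby.symm⟩

lemma auxAllLetters {σ : List A → List A} (hσhom : IsListHom σ)
    (hprim : IsPrimitiveSubst σ) {p : List A} (hp : p ∈ LangS σ) :
    ∃ n : ℕ, ∀ a : A, p <:+: σ^[n] [a] := by
  obtain ⟨n₀, a₀, hp0⟩ := hp
  obtain ⟨k, _, hall⟩ := hprim
  refine ⟨n₀ + k, fun a => ?_⟩
  have h1 : [a₀] <:+: σ^[k] [a] := by
    obtain ⟨s, t, hst⟩ := List.append_of_mem (hall a a₀)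
    exact ⟨s, t, by rw [hst]; simp⟩
  have h2 := auxHomInfix (auxHomIterate hσhom n₀) h1
  rw [← Function.iterate_add_apply] at h2
  exact hp0.trans h2

/-- Uniform recurrence for languages of primitive substitutions. -/
lemma auxUnifRec [Fintype A] [Nonempty A] {σ : List A → List A}
    (hσhom : IsListHom σ) (hprim : IsPrimitiveSubst σ) {p : List A}
    (hp : p ∈ LangS σ) :
    ∃ K : ℕ, 0 < K ∧ ∀ y ∈ LangS σ, K ≤ y.length → p <:+: y := by
  have himg : ∀ a : A, σ [a] ≠ [] := auxImgNeNil hσhom hprim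
  obtain ⟨n, hn⟩ := auxAllLetters hσhom hprim hp
  set M : ℕ := Finset.univ.sup (fun a : A => (σ^[n] [a]).length) with hM
  set C : ℕ := (Finset.range n).sup
    (fun j => Finset.univ.sup (fun c : A => (σ^[j] [c]).length)) with hC
  refine ⟨2 * M + C + 1, by omega, ?_⟩
  intro y hy hKy
  obtain ⟨N, c, hyc⟩ := hy
  by_cases hN : N < n
  · exfalso
    have h1 : (σ^[N] [c]).length ≤ C := by
      calc (σ^[N] [c]).length
          ≤ Finset.univ.sup (fun c : A => (σ^[N] [c]).length) :=
            Finset.le_sup (f := fun c : A => (σ^[N] [c]).length) (Finset.mem_univ c)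
        _ ≤ C := by
            rw [hC]
            exact Finset.le_sup
              (f := fun j => Finset.univ.sup (fun c : A => (σ^[j] [c]).length))
              (Finset.mem_range.mpr hN)
    have h2 := hyc.length_le
    omega
  · push_neg at hN
    obtain ⟨d, hd⟩ : ∃ d, N = n + d := ⟨N - n, by omega⟩
    have hiter : σ^[N] [c] = σ^[n] (σ^[d] [c]) := by
      rw [hd, Function.iterate_add_apply]
    have hflat : σ^[n] (σ^[d] [c]) =
        ((σ^[d] [c]).map (fun e => σ^[n] [e])).flatten :=
      auxHomFlatten (auxHomIterate hσhom n) _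
    have hblocks1 : ∀ b ∈ (σ^[d] [c]).map (fun e => σ^[n] [e]), b ≠ [] := by
      intro b hb
      obtain ⟨e, _, rfl⟩ := List.mem_map.mp hb
      exact auxIterSingleNeNil hσhom himg n e
    have hblocks2 : ∀ b ∈ (σ^[d] [c]).map (fun e => σ^[n] [e]), b.length ≤ M := by
      intro b hb
      obtain ⟨e, _, rfl⟩ := List.mem_map.mp hb
      rw [hM]; exact Finset.le_sup (f := fun a : A => (σ^[n] [a]).length) (Finset.mem_univ e)
    have hyinf : y <:+: ((σ^[d] [c]).map (fun e => σ^[n] [e])).flatten := by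
      rw [← hflat, ← hiter]; exact hyc
    have hyne : y ≠ [] := by
      rw [← List.length_pos_iff]; omega
    obtain ⟨b, hb, hbi⟩ := auxBlockInfix _ y hblocks1 hblocks2 hyinf (by omega) hyne
    obtain ⟨e, _, rfl⟩ := List.mem_map.mp hb
    exact (hn e).trans hbi

/-- There are arbitrarily long words in the language. -/
lemma auxLongWord [Fintype A] {σ : List A → List A}
    (hσhom : IsListHom σ) (hprim : IsPrimitiveSubst σ)
    (hA : 1 < Fintype.card A) (q : ℕ) : ∃ z ∈ LangS σ, q ≤ z.length := by
  obtain ⟨a₀, b₀, hab⟩ := Fintype.exists_pair_of_one_lt_card hA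
  obtain ⟨k, _, hall⟩ := hprim
  have hgrow : ∀ zz : List A, 2 * zz.length ≤ (σ^[k] zz).length := by
    intro zz
    induction zz with
    | nil => simp [auxIterateNil hσhom]
    | cons cc zz' ih =>
      have hsplit : σ^[k] (cc :: zz') = σ^[k] [cc] ++ σ^[k] zz' := by
        rw [show (cc :: zz') = [cc] ++ zz' from rfl, auxHomIterate hσhom k]
      have h2 : 2 ≤ (σ^[k] [cc]).length :=
        auxTwoLeLength (hall cc a₀) (hall cc b₀) hab
      rw [hsplit]
      simp only [List.length_append, List.length_cons]
      omega
  have hG : ∀ j : ℕ, j + 1 ≤ (σ^[j * k] [a₀]).length := by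
    intro j
    induction j with
    | zero => simp
    | succ j ih =>
      have heq : σ^[(j + 1) * k] [a₀] = σ^[k] (σ^[j * k] [a₀]) := by
        rw [show (j + 1) * k = k + j * k by ring, Function.iterate_add_apply]
      have := hgrow (σ^[j * k] [a₀])
      rw [heq]; omega
  exact ⟨σ^[q * k] [a₀], auxMemLangS _ _, by have := hG q; omega⟩

/-- Extract an occurrence of `p` within a prescribed window of `z`. -/
lemma auxOccWindow {L : Set (List A)}
    (hfc : ∀ {x y : List A}, x <:+: y → y ∈ L → x ∈ L) {p z : List A} {K : ℕ}
    (hUR : ∀ y ∈ L, K ≤ y.length → p <:+: y) (hz : z ∈ L) {s : ℕ}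
    (hlen : s + K ≤ z.length) :
    ∃ pre post : List A, z = pre ++ p ++ post ∧ s ≤ pre.length ∧
      pre.length ≤ s + K := by
  set W := (z.drop s).take K with hW
  have hWinf : W <:+: z :=
    (List.take_prefix _ _).isInfix.trans (List.drop_suffix _ _).isInfix
  have hWlen : W.length = K := by
    simp only [hW, List.length_take, List.length_drop]
    omega
  obtain ⟨w₁, w₂, hw⟩ := hUR W (hfc hWinf hz) (le_of_eq hWlen.symm)
  have hdropW : z.drop s = W ++ z.drop (s + K) := by
    conv_lhs => rw [← List.take_append_drop K (z.drop s)]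
    rw [List.drop_drop]
  have hzW : z = z.take s ++ W ++ z.drop (s + K) := by
    conv_lhs => rw [← List.take_append_drop s z, hdropW]
    simp [List.append_assoc]
  refine ⟨z.take s ++ w₁, w₂ ++ z.drop (s + K), ?_, ?_, ?_⟩
  · conv_lhs => rw [hzW, ← hw]
    simp [List.append_assoc]
  · simp only [List.length_append, List.length_take]
    omega
  · have hw1 : w₁.length + (p.length + w₂.length) = K := by
      have := congrArg List.length hw
      simpa [hWlen, List.length_append] using this
    simp only [List.length_append, List.length_take]
    omega

/-- The factor between two consecutive occurrences is a left return word. -/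
lemma auxConsecRet {L : Set (List A)}
    (hfc : ∀ {x y : List A}, x <:+: y → y ∈ L → x ∈ L)
    (z x A₁ B₁ A₂ B₂ : List A) (hz : z ∈ L)
    (h1 : z = A₁ ++ x ++ B₁) (h2 : z = A₂ ++ x ++ B₂)
    (hlt : A₁.length < A₂.length)
    (hmin2 : ∀ C D : List A, z = C ++ x ++ D → A₁.length < C.length →
      A₂.length ≤ C.length) :
    A₂.drop A₁.length ∈ leftReturn L x ∧ A₂ = A₁ ++ A₂.drop A₁.length := by
  have hA1 : List.take A₁.length z = A₁ := by
    rw [h1, List.append_assoc]; exact List.take_left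
  have hA2 : List.take A₂.length z = A₂ := by
    rw [h2, List.append_assoc]; exact List.take_left
  have hsub : A₂ = A₁ ++ A₂.drop A₁.length := by
    conv_lhs => rw [← List.take_append_drop A₁.length A₂]
    congr 1
    rw [← hA2, List.take_take, inf_eq_left.mpr hlt.le, hA1]
  set r := A₂.drop A₁.length with hr
  have hrlen : r.length = A₂.length - A₁.length := List.length_drop
  have hrne : r ≠ [] := by
    rw [← List.length_pos_iff]; omega
  have hz2 : z = A₁ ++ (r ++ x ++ B₂) := by
    rw [h2]; conv_lhs => rw [hsub]
    simp [List.append_assoc]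
  have h1' : z = A₁ ++ (x ++ B₁) := by rw [h1, List.append_assoc]
  have hcancel : r ++ x ++ B₂ = x ++ B₁ :=
    List.append_cancel_left (hz2.symm.trans h1')
  refine ⟨⟨?_, ?_, ?_⟩, hsub⟩
  · refine hfc ⟨A₁, B₂, ?_⟩ hz
    rw [hz2]; simp [List.append_assoc]
  · have hpre : x <+: r ++ x := by
      refine List.prefix_of_prefix_length_le (l₃ := x ++ B₁)
        (List.prefix_append x B₁) ⟨B₂, hcancel⟩ ?_
      simp
    obtain ⟨s, hs⟩ := hpre
    refine ⟨s, ?_, hs.symm⟩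
    intro hsnil
    rw [hsnil, List.append_nil] at hs
    have := congrArg List.length hs
    simp only [List.length_append] at this
    omega
  · rintro ⟨p, q, hp, hq, heq⟩
    have hz3 : z = (A₁ ++ p) ++ x ++ (q ++ B₂) := by
      rw [hz2, heq]; simp [List.append_assoc]
    have hge := hmin2 (A₁ ++ p) (q ++ B₂) hz3
      (by simp only [List.length_append]
          have := List.length_pos_iff.mpr hp
          omega)
    simp only [List.length_append] at hge
    have hlq := congrArg List.length heq
    simp only [List.length_append] at hlq
    have hqp := List.length_pos_iff.mpr hq
    omega

end AuxLemmas

/-- if ind(σ) = |w| ≥ |σ(a_min)|, then for all sufficiently long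
bispecial words v, `σ(R(a_min·v)) ≠ R(σ(a_min·v))`. -/
theorem return_preservation_fails_left {A : Type*} [Fintype A] [DecidableEq A]
    (hA : 1 < Fintype.card A) (u : List A) (hu : u ≠ []) (π : Equiv.Perm A)
    (w : List A) (hw : w <+: pal u)
    (σ : List A → List A) (hσhom : IsListHom σ)
    (hσ : ∀ a : A, psiW u [π a] ++ w = w ++ σ [a])
    (hprim : IsPrimitiveSubst σ)
    (amin : A) (hmin : ∀ a : A, a ≠ amin → (σ [amin]).length < (σ [a]).length)
    (hcond : (σ [amin]).length ≤ w.length) :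
    ∃ N : ℕ, ∀ n : ℕ, N ≤ n → ∀ v : List A, v.length = n →
      LeftSpecial (LangS σ) v → RightSpecial (LangS σ) v →
      σ '' leftReturn (LangS σ) (amin :: v) ≠
        leftReturn (LangS σ) (σ (amin :: v)) := by
  classical
  have hNE : Nonempty A := Fintype.card_pos_iff.mp (by omega)
  refine ⟨0, fun n hn v hv hLS _ => ?_⟩
  have hfc : ∀ {x y : List A}, x <:+: y → y ∈ LangS σ → x ∈ LangS σ :=
    fun hxy hy => auxLangSFactor hxy hy
  have himg : ∀ a : A, σ [a] ≠ [] := auxImgNeNil hσhom hprim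
  have hone : ∀ {z : List A}, z ≠ [] → 1 ≤ (σ z).length :=
    fun hz => List.length_pos_iff.mpr (auxSigmaNeNil hσhom himg hz)
  set t := σ [amin] with ht
  set m := t.length with hm
  have hm1 : 1 ≤ m := List.length_pos_iff.mpr (himg amin)
  have hmle : ∀ a : A, m ≤ (σ [a]).length := by
    intro a
    by_cases h : a = amin
    · rw [h]
    · exact (hmin a h).le
  -- length of ψ-images
  have hlenψ : ∀ a : A, (psiW u [π a]).length = (σ [a]).length := by
    intro a
    have := congrArg List.length (hσ a)
    simp only [List.length_append] at this
    omega
  have hsufw : ∀ a : A, σ [a] = List.drop w.length (psiW u [π a] ++ w) := by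
    intro a
    have h1 : List.drop w.length (w ++ σ [a]) = σ [a] := List.drop_left
    rw [← hσ a] at h1
    exact h1.symm
  have hkeydrop : ∀ (a : A) (la : ℕ), (σ [a]).length = la → la ≤ w.length →
      σ [a] = w.drop (w.length - la) := by
    intro a la hla hc
    have h1 : List.drop w.length (psiW u [π a] ++ w) =
        w.drop (w.length - la) := by
      rw [List.drop_append,
        List.drop_eq_nil_of_le (by rw [hlenψ a, hla]; exact hc),
        List.nil_append, hlenψ a, hla]
    conv_lhs => rw [hsufw a]
    exact h1
  -- t is a suffix of every σ [a]
  have htsuf : ∀ a : A, t <:+ σ [a] := by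
    intro a
    have htw : t = w.drop (w.length - m) := hkeydrop amin m hm.symm hcond
    obtain ⟨la, hla⟩ : ∃ la, (σ [a]).length = la := ⟨_, rfl⟩
    have hmla : m ≤ la := hla ▸ hmle a
    by_cases hcase : la ≤ w.length
    · have h2 : t = (σ [a]).drop (la - m) := by
        rw [hkeydrop a la hla hcase, List.drop_drop, htw]
        congr 1
        omega
      rw [h2]
      exact List.drop_suffix _ _
    · push_neg at hcase
      have h2 : σ [a] = (psiW u [π a]).drop w.length ++ w := by
        conv_lhs => rw [hsufw a]
        rw [List.drop_append,
          show w.length - (psiW u [π a]).length = 0 by rw [hlenψ a, hla]; omega,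
          List.drop_zero]
      have hwsuf : w <:+ σ [a] := ⟨(psiW u [π a]).drop w.length, h2.symm⟩
      have htw' : t <:+ w := by rw [htw]; exact List.drop_suffix _ _
      exact htw'.trans hwsuf
  have htsufz : ∀ {z : List A}, z ≠ [] → t <:+ σ z := by
    intro z hz
    rcases List.eq_nil_or_concat z with rfl | ⟨l, c, rfl⟩
    · exact absurd rfl hz
    · rw [List.concat_eq_append, hσhom]
      exact (htsuf c).trans (List.suffix_append _ _)
  -- pick b ≠ amin with b :: v in the language
  obtain ⟨a', b', hab', ha', hb'⟩ := hLS
  obtain ⟨b, hbne, hbv⟩ : ∃ b : A, b ≠ amin ∧ (b :: v) ∈ LangS σ := by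
    by_cases h : a' = amin
    · exact ⟨b', by rw [← h]; exact hab'.symm, hb'⟩
    · exact ⟨a', h, ha'⟩
  set x : List A := amin :: v with hx
  have hσx : σ x = t ++ σ v := by
    rw [hx, show (amin :: v) = [amin] ++ v from rfl, hσhom, ht]
  by_cases hxL : x ∈ LangS σ
  · -- main case
    obtain ⟨K₁, hK₁pos, hUR₁⟩ := auxUnifRec hσhom hprim hxL
    obtain ⟨K₂, hK₂pos, hUR₂⟩ := auxUnifRec hσhom hprim hbv
    obtain ⟨z, hzL, hzlen⟩ := auxLongWord hσhom hprim hA (2 * K₁ + K₂ + 1)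
    -- occurrence of b :: v in the window [K₁, K₁ + K₂]
    obtain ⟨C, D, hCD, hCge, hCle⟩ :=
      auxOccWindow hfc hUR₂ hzL (s := K₁) (by omega)
    set Q := C.length with hQ
    -- occurrence of x at position ≤ Q
    obtain ⟨P₀, S₀, hP₀, _, hP₀le⟩ :=
      auxOccWindow hfc hUR₁ hzL (s := 0) (by omega)
    -- occurrence of x at position > Q
    obtain ⟨P₃, S₃, hP₃, hP₃ge, _⟩ :=
      auxOccWindow hfc hUR₁ hzL (s := Q + 1) (by omega)
    set Occ : ℕ → Prop := fun pp => ∃ pre post : List A,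
      z = pre ++ x ++ post ∧ pre.length = pp with hOcc
    set p₁ := Nat.findGreatest Occ Q with hp₁def
    have hp₁occ : Occ p₁ :=
      Nat.findGreatest_spec (m := P₀.length) (by omega) ⟨P₀, S₀, hP₀, rfl⟩
    have hp₁le : p₁ ≤ Q := Nat.findGreatest_le _
    have hex₂ : ∃ pp : ℕ, p₁ < pp ∧ Occ pp :=
      ⟨P₃.length, by omega, ⟨P₃, S₃, hP₃, rfl⟩⟩
    set p₂ := Nat.find hex₂ with hp₂def
    obtain ⟨hp₁₂, A₂, B₂, h2, hA₂len⟩ := Nat.find_spec hex₂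
    have hQp₂ : Q < p₂ := by
      by_contra hle
      push_neg at hle
      exact Nat.findGreatest_is_greatest hp₁₂ hle ⟨A₂, B₂, h2, hA₂len⟩
    obtain ⟨A₁, B₁, h1, hA₁len⟩ := hp₁occ
    have hminOcc : ∀ C' D' : List A, z = C' ++ x ++ D' →
        A₁.length < C'.length → A₂.length ≤ C'.length := by
      intro C' D' hzd hlt'
      by_contra hlt2
      push_neg at hlt2
      rw [hA₂len] at hlt2
      exact Nat.find_min hex₂ hlt2 ⟨by omega, ⟨C', D', hzd, rfl⟩⟩
    obtain ⟨hret, hsplit⟩ := auxConsecRet hfc z x A₁ B₁ A₂ B₂ hzL h1 h2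
      (by omega) hminOcc
    set r₀ := A₂.drop A₁.length with hr₀
    -- p₁ < Q, strictly
    have hp₁Q : p₁ < Q := by
      rcases Nat.lt_or_ge p₁ Q with h | h
      · exact h
      · exfalso
        have hpq : p₁ = Q := le_antisymm hp₁le h
        have hA1tk : List.take p₁ z = A₁ := by
          rw [← hA₁len, h1, List.append_assoc]; exact List.take_left
        have hCtk : List.take Q z = C := by
          rw [hQ, hCD, List.append_assoc]; exact List.take_left
        have hAC : A₁ = C := by rw [← hA1tk, ← hCtk, hpq]
        have hcc : x ++ B₁ = (b :: v) ++ D := by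
          apply List.append_cancel_left (as := A₁)
          rw [← List.append_assoc, ← h1, hAC, ← List.append_assoc, ← hCD]
        rw [hx] at hcc
        simp only [List.cons_append, List.cons.injEq] at hcc
        exact hbne hcc.1.symm
    -- inner occurrence of v strictly inside r₀ ++ x
    have hE : z = (C ++ [b]) ++ v ++ D := by
      rw [hCD]; simp [List.append_assoc]
    set E := C ++ [b] with hEdef
    have hElen : E.length = Q + 1 := by simp [hEdef, hQ]
    have hzy : z = A₁ ++ ((r₀ ++ x) ++ B₂) := by
      rw [h2]
      conv_lhs => rw [hsplit]
      simp [List.append_assoc]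
    have hEsplit : E = A₁ ++ E.drop A₁.length := by
      have hA1tk : List.take p₁ z = A₁ := by
        rw [← hA₁len, h1, List.append_assoc]; exact List.take_left
      have hEtk : List.take (Q + 1) z = E := by
        rw [hE, List.append_assoc, ← hElen]; exact List.take_left
      conv_lhs => rw [← List.take_append_drop A₁.length E]
      congr 1
      rw [← hEtk, List.take_take, hA₁len,
        inf_eq_left.mpr (by omega : p₁ ≤ Q + 1), hA1tk]
    set y₁ := E.drop A₁.length with hy₁def
    have hy₁len : y₁.length = Q + 1 - p₁ := by
      rw [hy₁def, List.length_drop, hElen, hA₁len]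
    have hzy' : z = A₁ ++ (y₁ ++ (v ++ D)) := by
      rw [hE]
      conv_lhs => rw [hEsplit]
      simp [List.append_assoc]
    have hyB : (r₀ ++ x) ++ B₂ = y₁ ++ (v ++ D) :=
      List.append_cancel_left (hzy.symm.trans hzy')
    have hr₀len : r₀.length = p₂ - p₁ := by
      rw [hr₀, List.length_drop, hA₂len, hA₁len]
    have hxlen : x.length = v.length + 1 := by simp [hx]
    have hy₁2 : 2 ≤ y₁.length := by omega
    have hy₁small : y₁.length + v.length + 1 ≤ (r₀ ++ x).length := by
      simp only [List.length_append, hxlen]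
      omega
    set yy := r₀ ++ x with hyydef
    have hyy : yy = y₁ ++ v ++
        (D.take (yy.length - y₁.length - v.length)) := by
      have h := congrArg (List.take yy.length) hyB
      rw [List.take_left] at h
      rw [List.take_append, List.take_append] at h
      rw [List.take_of_length_le (by omega : y₁.length ≤ yy.length),
        List.take_of_length_le (by
          rw [hyydef]
          simp only [List.length_append, hxlen] at hy₁small ⊢
          omega : v.length ≤ yy.length - y₁.length)] at h
      rw [h]
      simp [List.append_assoc]
    set y₂ := D.take (yy.length - y₁.length - v.length) with hy₂def
    have hy₂ne : y₂ ≠ [] := by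
      have hl := congrArg List.length hyy
      simp only [List.length_append] at hl
      have : yy.length = (r₀ ++ x).length := by rw [hyydef]
      simp only [List.length_append, hxlen] at this hy₁small
      rw [← List.length_pos_iff]
      omega
    have hy₁ne : y₁ ≠ [] := by
      rw [← List.length_pos_iff]; omega
    obtain ⟨Pw, hPw⟩ := htsufz hy₁ne
    have hPwne : Pw ≠ [] := by
      obtain ⟨c₁, y₁', hcons⟩ := List.exists_cons_of_ne_nil hy₁ne
      have hy₁'ne : y₁' ≠ [] := by
        intro hnil
        rw [hcons, hnil] at hy₁2
        simp only [List.length_cons, List.length_nil] at hy₁2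
        omega
      have hlen1 : m + 1 ≤ (σ y₁).length := by
        rw [hcons, show (c₁ :: y₁') = [c₁] ++ y₁' from rfl, hσhom]
        simp only [List.length_append]
        have h4 := hmle c₁
        have h5 := hone hy₁'ne
        omega
      have := congrArg List.length hPw
      simp only [List.length_append] at this
      rw [← List.length_pos_iff]
      omega
    have hkey : σ r₀ ++ σ x = Pw ++ σ x ++ σ y₂ := by
      calc σ r₀ ++ σ x = σ (r₀ ++ x) := (hσhom _ _).symm
        _ = σ (y₁ ++ v ++ y₂) := by rw [← hyydef, hyy, hy₂def]
        _ = σ y₁ ++ σ v ++ σ y₂ := by rw [hσhom, hσhom]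
        _ = Pw ++ σ x ++ σ y₂ := by
            rw [← hPw, hσx]
            simp [List.append_assoc]
    intro hEq
    have hmem : σ r₀ ∈ leftReturn (LangS σ) (σ x) := by
      rw [← hEq]
      exact Set.mem_image_of_mem σ hret
    exact hmem.2.2 ⟨Pw, σ y₂, hPwne, auxSigmaNeNil hσhom himg hy₂ne, hkey⟩
  · -- degenerate case: amin :: v is not in the language
    intro hEq
    have hσbv : σ (b :: v) ∈ LangS σ := auxLangSSigma hσhom hbv
    have hσxL : σ x ∈ LangS σ := by
      obtain ⟨g, hg⟩ := htsuf b
      refine hfc (y := σ (b :: v)) ⟨g, [], ?_⟩ hσbv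
      rw [show (b :: v) = [b] ++ v from rfl, hσhom, ← hg, hσx]
      simp [List.append_assoc]
    obtain ⟨K, hKpos, hUR⟩ := auxUnifRec hσhom hprim hσxL
    obtain ⟨z, hzL, hzlen⟩ := auxLongWord hσhom hprim hA (2 * K + 1)
    obtain ⟨P₀, S₀, hP₀, _, hP₀le⟩ :=
      auxOccWindow hfc hUR hzL (s := 0) (by omega)
    obtain ⟨P₃, S₃, hP₃, hP₃ge, _⟩ :=
      auxOccWindow hfc hUR hzL (s := P₀.length + 1) (by omega)
    set Occ : ℕ → Prop := fun pp => ∃ pre post : List A,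
      z = pre ++ σ x ++ post ∧ pre.length = pp with hOcc
    have hex₂ : ∃ pp : ℕ, P₀.length < pp ∧ Occ pp :=
      ⟨P₃.length, by omega, ⟨P₃, S₃, hP₃, rfl⟩⟩
    obtain ⟨hp₁₂, A₂, B₂, h2, hA₂len⟩ := Nat.find_spec hex₂
    have hminOcc : ∀ C' D' : List A, z = C' ++ σ x ++ D' →
        P₀.length < C'.length → A₂.length ≤ C'.length := by
      intro C' D' hzd hlt'
      by_contra hlt2
      push_neg at hlt2
      rw [hA₂len] at hlt2
      exact Nat.find_min hex₂ hlt2 ⟨hlt', ⟨C', D', hzd, rfl⟩⟩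
    obtain ⟨hret, _⟩ := auxConsecRet hfc z (σ x) P₀ S₀ A₂ B₂ hzL hP₀ h2
      (by omega) hminOcc
    rw [← hEq] at hret
    obtain ⟨r, hr, _⟩ := hret
    exact hxL (hfc ⟨r, [], by simp⟩ hr.1)
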